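/- For X ~ Binomial(2m, 1/2) (even number of trials), E[|X - m|] = (2m-1)!/(2^{2m-1}((m-1)!)^2), i.e., the mean absolute deviation for 2m trials equals that for 2m-1 trials. -/

import Mathlib

open Finset

lemma tele (N : ℕ) (hN : 1 ≤ N) (k : ℕ) :
    ((2*(k+1) : ℝ) - N) * (N.choose (k+1)) =
      (N : ℝ) * ((N-1).choose k) - (N : ℝ) * ((N-1).choose (k+1)) := by
  have e : N - 1 + 1 = N := by omega
  have h1 : N * (N-1).choose k = N.choose (k+1) * (k+1) := by
    have := Nat.add_one_mul_choose_eq (N-1) k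
    simp only [Nat.succ_eq_add_one, e] at this
    exact this
  have h2 : (N-1).choose k + (N-1).choose (k+1) = N.choose (k+1) := by
    have := (Nat.choose_succ_succ (N-1) k).symm
    simp only [Nat.succ_eq_add_one, e] at this
    exact this
  have h1' : (N : ℝ) * ((N-1).choose k) = (N.choose (k+1) : ℝ) * (k+1) := by
    exact_mod_cast congrArg (Nat.cast : ℕ → ℝ) h1
  have h2' : ((N-1).choose k : ℝ) + ((N-1).choose (k+1) : ℝ) = (N.choose (k+1) : ℝ) := by
    exact_mod_cast congrArg (Nat.cast : ℕ → ℝ) h2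
  linear_combination (N:ℝ) * h2' - 2 * h1'

lemma sumUpper (N j : ℕ) (hN : 1 ≤ N) (hj : 1 ≤ j) :
    ∑ k ∈ Finset.Ico j (N+1), (2*(k:ℝ) - N) * (N.choose k) =
      (N : ℝ) * ((N-1).choose (j-1)) := by
  obtain ⟨j', rfl⟩ : ∃ j', j = j' + 1 := ⟨j-1, by omega⟩
  rw [Finset.sum_Ico_eq_sum_range]
  have hc : ∀ i ∈ Finset.range (N + 1 - (j'+1)),
      (2*(((j'+1)+i : ℕ):ℝ) - N) * (N.choose ((j'+1)+i))
      = (fun i => (N:ℝ) * ((N-1).choose (j'+i))) i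
        - (fun i => (N:ℝ) * ((N-1).choose (j'+i))) (i+1) := by
    intro i _
    have := tele N hN (j'+i)
    have e1 : j' + 1 + i = (j'+i) + 1 := by omega
    have e2 : j' + (i+1) = (j'+i) + 1 := by omega
    simp only [e1, e2]
    convert this using 2
    push_cast; ring
  rw [Finset.sum_congr rfl hc, Finset.sum_range_sub' (fun i => (N:ℝ) * ((N-1).choose (j'+i)))]
  simp only [Nat.add_sub_cancel]
  by_cases h : j' + 1 ≤ N
  · have hz : (N-1).choose (j' + (N + 1 - (j'+1))) = 0 :=
      Nat.choose_eq_zero_of_lt (by omega)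
    simp only [hz, Nat.cast_zero, mul_zero, sub_zero, Nat.add_zero]
  · have h0 : N + 1 - (j'+1) = 0 := by omega
    have hz : (N-1).choose j' = 0 := Nat.choose_eq_zero_of_lt (by omega)
    simp [h0, hz]

lemma sumLower (N j : ℕ) (hN : 1 ≤ N) (hj : 1 ≤ j) :
    ∑ k ∈ Finset.range j, ((N:ℝ) - 2*(k:ℝ)) * (N.choose k) =
      (N : ℝ) * ((N-1).choose (j-1)) := by
  obtain ⟨j', rfl⟩ : ∃ j', j = j' + 1 := ⟨j-1, by omega⟩
  rw [Finset.sum_range_succ']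
  have hc : ∀ i ∈ Finset.range j',
      ((N:ℝ) - 2*(((i+1 : ℕ)):ℝ)) * (N.choose (i+1))
      = (fun i => (N:ℝ) * ((N-1).choose i)) (i+1)
        - (fun i => (N:ℝ) * ((N-1).choose i)) i := by
    intro i _
    have := tele N hN i
    simp only
    push_cast
    linear_combination -this
  rw [Finset.sum_congr rfl hc, Finset.sum_range_sub (fun i => (N:ℝ) * ((N-1).choose i))]
  simp

/-- `D N = E[|X - N/2|]` for `X ~ Binomial(N, 1/2)`. -/
noncomputable def D (N : ℕ) : ℝ :=
  ∑ k ∈ Finset.range (N + 1), (N.choose k : ℝ) / 2 ^ N * |(k : ℝ) - (N : ℝ) / 2|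

lemma D_eq (m N : ℕ) (hm : 1 ≤ m) (hl : 2*m - 1 ≤ N) (hr : N ≤ 2*m) :
    D N = (N : ℝ) * ((N-1).choose (m-1)) / 2^N := by
  have hN : 1 ≤ N := by omega
  have hmN : m ≤ N + 1 := by omega
  have key : ∑ k ∈ Finset.range (N+1), (N.choose k : ℝ) * |(k:ℝ) - (N:ℝ)/2|
      = (N:ℝ) * ((N-1).choose (m-1)) := by
    rw [← Finset.sum_range_add_sum_Ico _ hmN]
    have hL : ∑ k ∈ Finset.range m, (N.choose k : ℝ) * |(k:ℝ) - (N:ℝ)/2|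
        = (1/2) * ∑ k ∈ Finset.range m, ((N:ℝ) - 2*(k:ℝ)) * (N.choose k) := by
      rw [Finset.mul_sum]
      refine Finset.sum_congr rfl fun k hk => ?_
      have hk' : 2*k + 1 ≤ N := by
        simp only [Finset.mem_range] at hk; omega
      have h2 : (2*(k:ℝ)) < N := by exact_mod_cast (by omega : 2*k < N)
      rw [abs_of_neg (by linarith)]
      ring
    have hU : ∑ k ∈ Finset.Ico m (N+1), (N.choose k : ℝ) * |(k:ℝ) - (N:ℝ)/2|
        = (1/2) * ∑ k ∈ Finset.Ico m (N+1), (2*(k:ℝ) - (N:ℝ)) * (N.choose k) := by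
      rw [Finset.mul_sum]
      refine Finset.sum_congr rfl fun k hk => ?_
      have hk' : N ≤ 2*k := by
        simp only [Finset.mem_Ico] at hk; omega
      have h2 : (N:ℝ) ≤ 2*(k:ℝ) := by exact_mod_cast hk'
      rw [abs_of_nonneg (by linarith)]
      ring
    rw [hL, hU, sumLower N m hN hm, sumUpper N m hN hm]
    ring
  unfold D
  have : ∀ k ∈ Finset.range (N+1), (N.choose k : ℝ) / 2 ^ N * |(k : ℝ) - (N : ℝ) / 2|
      = (1/2^N) * ((N.choose k : ℝ) * |(k:ℝ) - (N:ℝ)/2|) := by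
    intro k _; ring
  rw [Finset.sum_congr rfl this, ← Finset.mul_sum, key]
  ring

theorem stmt_14 (m : ℕ) (hm : 1 ≤ m) :
    D (2 * m) =
        (Nat.factorial (2 * m - 1) : ℝ) /
          (2 ^ (2 * m - 1) * ((Nat.factorial (m - 1) : ℝ)) ^ 2) ∧
      D (2 * m - 1) =
        (Nat.factorial (2 * m - 1) : ℝ) /
          (2 ^ (2 * m - 1) * ((Nat.factorial (m - 1) : ℝ)) ^ 2) := by
  have h1 := D_eq m (2*m) hm (by omega) (by omega)
  have h2 := D_eq m (2*m-1) hm (by omega) (by omega)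
  rw [show 2*m - 1 - 1 = 2*m - 2 by omega] at h2
  have hfe : (2*m-1).choose (m-1) * (m-1).factorial * m.factorial = (2*m-1).factorial := by
    have := Nat.choose_mul_factorial_mul_factorial (show m-1 ≤ 2*m-1 by omega)
    rwa [show 2*m-1 - (m-1) = m by omega] at this
  have hfo : (2*m-2).choose (m-1) * (m-1).factorial * (m-1).factorial = (2*m-2).factorial := by
    have := Nat.choose_mul_factorial_mul_factorial (show m-1 ≤ 2*m-2 by omega)
    rwa [show 2*m-2 - (m-1) = m-1 by omega] at this
  have hsucc : (2*m-1).factorial = (2*m-1) * (2*m-2).factorial := by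
    have := Nat.factorial_succ (2*m-2)
    rwa [show 2*m-2+1 = 2*m-1 by omega] at this
  have hms : m.factorial = m * (m-1).factorial := by
    have := Nat.factorial_succ (m-1)
    rwa [show m-1+1 = m by omega] at this
  set A : ℝ := ((2*m-1).choose (m-1) : ℝ) with hA
  set B : ℝ := ((2*m-2).choose (m-1) : ℝ) with hB
  set f : ℝ := ((m-1).factorial : ℝ) with hf
  set F1 : ℝ := ((2*m-1).factorial : ℝ) with hF1
  set F2 : ℝ := ((2*m-2).factorial : ℝ) with hF2
  have c1 : A * f * ((m:ℝ) * f) = F1 := by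
    rw [hA, hf, hF1]
    exact_mod_cast congrArg (Nat.cast : ℕ → ℝ) (hms ▸ hfe)
  have c2 : B * f * f = F2 := by
    rw [hB, hf, hF2]; exact_mod_cast congrArg (Nat.cast : ℕ → ℝ) hfo
  have c3 : F1 = (2*(m:ℝ) - 1) * F2 := by
    rw [hF1, hF2]
    have := congrArg (Nat.cast : ℕ → ℝ) hsucc
    push_cast [show (1:ℕ) ≤ 2*m by omega] at this
    convert this using 2
  have hfne : f ≠ 0 := by
    rw [hf]; exact_mod_cast Nat.factorial_ne_zero (m-1)
  have hp : (2:ℝ)^(2*m) = 2 * 2^(2*m-1) := by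
    have h : (2:ℝ)^((2*m-1)+1) = 2 * 2^(2*m-1) := by rw [pow_succ]; ring
    rwa [show (2*m-1)+1 = 2*m from by omega] at h
  have hpne : (2:ℝ)^(2*m-1) ≠ 0 := by positivity
  constructor
  · rw [h1, hp]
    have hcast : ((2*m : ℕ) : ℝ) = 2*(m:ℝ) := by push_cast; ring
    rw [hcast]
    field_simp
    linear_combination c1
  · rw [h2]
    have hcast : ((2*m-1 : ℕ) : ℝ) = 2*(m:ℝ) - 1 := by
      push_cast [show (1:ℕ) ≤ 2*m by omega]; ring
    rw [hcast]
    field_simp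
    linear_combination (2*(m:ℝ)-1) * c2 - c3
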